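/- If G is a minimal forbidden induced subgraph for Υ_k with dominating vertex v, then for every vertex x ≠ v, χ(G - x) = χ(G); equivalently, in every optimal proper coloring of G - v, each color class has at least two vertices. -/

import Mathlib

open SimpleGraph

attribute [local instance] Classical.propDecidable

set_option linter.unnecessarySeqFocus false

/-- `G ∈ Υ_k`: every nonempty induced subgraph `H` satisfies `Δ(H) + 1 ≤ χ(H) + k`,
i.e. `Δ(H) ≤ χ(H) + k - 1`. -/
def UpsilonMem (k : ℕ) {V : Type*} [Fintype V] (G : SimpleGraph V) : Prop :=
  ∀ s : Finset V, s.Nonempty →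
    ((G.induce (s : Set V)).maxDegree + 1 : ℕ∞) ≤
      (G.induce (s : Set V)).chromaticNumber + (k : ℕ∞)

/-- `G ∈ Ω_k`: every nonempty induced subgraph `H` satisfies `Δ(H) + 1 ≤ ω(H) + k`. -/
def OmegaMem (k : ℕ) {V : Type*} [Fintype V] (G : SimpleGraph V) : Prop :=
  ∀ s : Finset V, s.Nonempty →
    (G.induce (s : Set V)).maxDegree + 1 ≤ (G.induce (s : Set V)).cliqueNum + k

/-- `G` is a minimal forbidden induced subgraph for `Υ_k`. -/
def MinForbUpsilon (k : ℕ) {V : Type*} [Fintype V] (G : SimpleGraph V) : Prop :=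
  ¬ UpsilonMem k G ∧
    ∀ s : Finset V, s ≠ Finset.univ → UpsilonMem k (G.induce (s : Set V))

/-- `G` is a minimal forbidden induced subgraph for `Ω_k`. -/
def MinForbOmega (k : ℕ) {V : Type*} [Fintype V] (G : SimpleGraph V) : Prop :=
  ¬ OmegaMem k G ∧
    ∀ s : Finset V, s ≠ Finset.univ → OmegaMem k (G.induce (s : Set V))

/-- `v` is a dominating vertex of `G`. -/
def IsDominatingVertex {V : Type*} (G : SimpleGraph V) (v : V) : Prop :=
  ∀ w, w ≠ v → G.Adj v w

/-- In every optimal proper coloring of `G`, every used color class has at least 2 vertices. -/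
def AllColorClassesBig {V : Type*} [Fintype V] (G : SimpleGraph V) : Prop :=
  ∀ (n : ℕ) (C : G.Coloring (Fin n)), (n : ℕ∞) = G.chromaticNumber →
    ∀ c : Fin n, (∃ u, C u = c) → 2 ≤ Fintype.card {u // C u = c}

/-- `G` is a perfect graph: clique number equals chromatic number for every induced subgraph. -/
def IsPerfect {V : Type*} [Fintype V] (G : SimpleGraph V) : Prop :=
  ∀ s : Finset V,
    (((G.induce (s : Set V)).cliqueNum : ℕ∞)) = (G.induce (s : Set V)).chromaticNumber

/-- Add a dominating vertex to `G`. -/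
def cone {V : Type*} (G : SimpleGraph V) : SimpleGraph (Option V) where
  Adj a b := match a, b with
    | some a, some b => G.Adj a b
    | some _, none => True
    | none, some _ => True
    | none, none => False
  symm := ⟨by rintro (_|a) (_|b) h <;> simp_all <;> exact h.symm⟩
  loopless := ⟨by rintro (_|a) h <;> simp_all⟩

/-- The claw `K_{1,3}`. -/
def claw : SimpleGraph (Fin 1 ⊕ Fin 3) := completeBipartiteGraph (Fin 1) (Fin 3)

/-- The gem: `P₄` plus a dominating vertex. -/
def gem : SimpleGraph (Option (Fin 4)) := cone (pathGraph 4)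

/-- The wheel `W₄`: `C₄` plus a dominating vertex. -/
def wheel4 : SimpleGraph (Option (Fin 4)) := cone (cycleGraph 4)

/-- The butterfly: two triangles sharing exactly one vertex. -/
def butterfly : SimpleGraph (Fin 5) :=
  SimpleGraph.fromRel (fun a b =>
    (a, b) ∈ [((0:Fin 5), (1:Fin 5)), (0,2), (1,2), (0,3), (0,4), (3,4)])

/-- `G` is a disjoint union of complete graphs. -/
def IsUnionOfCliques {V : Type*} (G : SimpleGraph V) : Prop :=
  ∀ a b c, G.Adj a b → G.Adj b c → a ≠ c → G.Adj a c

/-- `G` is neighborhood perfect: the neighborhood of every vertex induces a perfect graph. -/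
def NbhdPerfect {V : Type*} [Fintype V] (G : SimpleGraph V) : Prop :=
  ∀ v : V, IsPerfect (G.induce (G.neighborSet v))

/-
Since `v` is dominating, `Δ(H) + 1 = |H|` for every induced subgraph `H` containing `v`.
Minimality places the violation of `Υ_k` at `G` itself, so `χ(G) + k < |G|`, while `G - x ∈ Υ_k`
gives `|G| - 1 ≤ χ(G - x) + k`; hence `χ(G - x) = χ(G)`. If an optimal colouring of `G - v` had a
singleton class `{u}`, giving `v` that colour would colour `G - u` with `χ(G - v) < χ(G)` colours.
-/

section DominatingVertex

variable {V : Type*} {G : SimpleGraph V} {v : V}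

theorem IsDominatingVertex.induce (hv : IsDominatingVertex G v) {s : Set V} (hs : v ∈ s) :
    IsDominatingVertex (G.induce s) ⟨v, hs⟩ :=
  fun w hw => hv w fun h => hw (Subtype.ext h)

theorem IsDominatingVertex.maxDegree_add_one [Fintype V] [DecidableRel G.Adj]
    (hv : IsDominatingVertex G v) : G.maxDegree + 1 = Fintype.card V := by
  have : Nonempty V := ⟨v⟩
  have hdeg : G.degree v = Fintype.card V - 1 := by
    rw [← card_neighborFinset_eq_degree, ← Finset.card_univ,
      ← Finset.card_erase_of_mem (Finset.mem_univ v)]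
    congr 1
    ext w
    simp only [mem_neighborFinset, Finset.mem_erase, Finset.mem_univ, and_true]
    exact ⟨fun h => (G.ne_of_adj h).symm, hv w⟩
  have h1 := G.degree_le_maxDegree v
  have h2 := G.maxDegree_lt_card_verts
  omega

theorem IsDominatingVertex.chromaticNumber_induce_compl_add_one_le
    (hv : IsDominatingVertex G v) :
    (G.induce {v}ᶜ).chromaticNumber + 1 ≤ G.chromaticNumber := by
  rw [G.chromaticNumber_eq_biInf]
  refine le_iInf₂ fun m ⟨D⟩ => ?_
  have hm : 1 ≤ m := Fin.pos_iff_nonempty.2 ⟨D v⟩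
  let D' : (G.induce {v}ᶜ).Coloring {c : Fin m // c ≠ D v} :=
    Coloring.mk (fun w => ⟨D w, (D.valid (hv w w.2)).symm⟩)
      fun hab hD => D.valid hab (congrArg Subtype.val hD)
  have hcard : Fintype.card {c : Fin m // c ≠ D v} = m - 1 := by simp
  have := (hcard ▸ D'.colorable).chromaticNumber_le
  calc (G.induce {v}ᶜ).chromaticNumber + 1 ≤ ((m - 1 : ℕ) : ℕ∞) + 1 := by gcongr
    _ = m := by norm_cast; omega

end DominatingVertex

namespace SimpleGraph

variable {V : Type*} {G : SimpleGraph V} {v : V}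

theorem Coloring.nonempty_coloring_induce_compl_of_forall_eq {α : Type*}
    (C : (G.induce {v}ᶜ).Coloring α) {c : α} {u : V} (hc : ∀ w, C w = c → (w : V) = u) :
    Nonempty ((G.induce {u}ᶜ).Coloring α) := by
  refine ⟨Coloring.mk (fun w => if hw : (w : V) = v then c else C ⟨w, hw⟩) ?_⟩
  intro a b hab
  by_cases ha : (a : V) = v <;> by_cases hb : (b : V) = v
  · exact absurd (ha.trans hb.symm) (G.ne_of_adj hab)
  · rw [dif_pos ha, dif_neg hb]
    exact fun h => b.2 (hc _ h.symm)
  · rw [dif_neg ha, dif_pos hb]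
    exact fun h => a.2 (hc _ h)
  · rw [dif_neg ha, dif_neg hb]
    exact C.valid hab

def induceFinsetUnivIso [Fintype V] (G : SimpleGraph V) :
    G.induce ((Finset.univ : Finset V) : Set V) ≃g G where
  toEquiv := Equiv.subtypeUnivEquiv fun _ => Finset.mem_coe.2 (Finset.mem_univ _)
  map_rel_iff' := Iff.rfl

end SimpleGraph

section Upsilon

variable {k : ℕ} {V : Type*} [Fintype V] {G : SimpleGraph V}

theorem UpsilonMem.maxDegree_add_one_le [Nonempty V] (h : UpsilonMem k G) :
    (G.maxDegree + 1 : ℕ∞) ≤ G.chromaticNumber + k := by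
  have := h Finset.univ Finset.univ_nonempty
  rwa [G.induceFinsetUnivIso.maxDegree_eq, chromaticNumber_congr G.induceFinsetUnivIso] at this

theorem UpsilonMem.card_le_of_isDominatingVertex (h : UpsilonMem k G) {v : V}
    (hv : IsDominatingVertex G v) : (Fintype.card V : ℕ∞) ≤ G.chromaticNumber + k := by
  have : Nonempty V := ⟨v⟩
  simpa [← hv.maxDegree_add_one] using h.maxDegree_add_one_le

theorem MinForbUpsilon.chromaticNumber_add_lt (h : MinForbUpsilon k G) :
    G.chromaticNumber + k < G.maxDegree + 1 := by
  by_contra! hle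
  refine h.1 fun s hs => ?_
  by_cases hs_univ : s = Finset.univ
  · subst hs_univ
    rwa [G.induceFinsetUnivIso.maxDegree_eq, chromaticNumber_congr G.induceFinsetUnivIso]
  · have : Nonempty (s : Set V) := hs.to_subtype
    exact (h.2 s hs_univ).maxDegree_add_one_le

theorem MinForbUpsilon.chromaticNumber_add_lt_card (h : MinForbUpsilon k G) {v : V}
    (hv : IsDominatingVertex G v) : G.chromaticNumber + k < Fintype.card V := by
  simpa [← hv.maxDegree_add_one] using h.chromaticNumber_add_lt

theorem MinForbUpsilon.chromaticNumber_le_induce_compl (h : MinForbUpsilon k G) {v x : V}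
    (hv : IsDominatingVertex G v) (hx : x ≠ v) :
    G.chromaticNumber ≤ (G.induce {x}ᶜ).chromaticNumber := by
  have hvx : v ∈ (({x}ᶜ : Finset V) : Set V) := by simpa using hx.symm
  have hsub := (h.2 {x}ᶜ (by simp)).card_le_of_isDominatingVertex (hv.induce hvx)
  have hcard : Fintype.card (({x}ᶜ : Finset V) : Set V) = Fintype.card V - 1 := by
    simp only [Finset.coe_sort_coe, Fintype.card_coe, Finset.card_compl, Finset.card_singleton]
  rw [hcard, Finset.coe_compl, Finset.coe_singleton] at hsub
  have : Nonempty V := ⟨v⟩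
  have hG := h.chromaticNumber_add_lt_card hv
  rw [← Nat.sub_add_cancel Fintype.card_pos, Nat.cast_add, Nat.cast_one,
    ENat.lt_add_one_iff (ENat.natCast_ne_top _)] at hG
  exact (ENat.add_le_add_iff_right (ENat.natCast_ne_top k)).1 (hG.trans hsub)

end Upsilon

theorem minForbUpsilon_chromatic_delete (k : ℕ) {V : Type*} [Fintype V]
    (G : SimpleGraph V) (v : V) (h : MinForbUpsilon k G)
    (hv : IsDominatingVertex G v) :
    (∀ x : V, x ≠ v →
        (G.induce ({x}ᶜ : Set V)).chromaticNumber = G.chromaticNumber) ∧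
      AllColorClassesBig (G.induce ({v}ᶜ : Set V)) := by
  have hdelete : ∀ x : V, x ≠ v →
      (G.induce ({x}ᶜ : Set V)).chromaticNumber = G.chromaticNumber := fun x hx =>
    le_antisymm (chromaticNumber_mono_of_hom (Embedding.induce _).toHom)
      (h.chromaticNumber_le_induce_compl hv hx)
  refine ⟨hdelete, fun n C hn c ⟨u, hu⟩ => ?_⟩
  by_contra! hsmall
  have hclass : ∀ w, C w = c → (w : V) = u := fun w hw =>
    congrArg (fun w : {w // C w = c} => (w : V))
      (Fintype.card_le_one_iff.1 (Nat.le_of_lt_succ hsmall) ⟨w, hw⟩ ⟨u, hu⟩)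
  obtain ⟨C'⟩ := C.nonempty_coloring_induce_compl_of_forall_eq hclass
  have hle : G.chromaticNumber ≤ n := hdelete u u.2 ▸ Colorable.chromaticNumber_le ⟨C'⟩
  have hlt := hv.chromaticNumber_induce_compl_add_one_le
  rw [← hn] at hlt
  have := hlt.trans hle
  norm_cast at this
  omega
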